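/- If t > 0 satisfies t² · ∫_𝒟 y⁴|φ(z)|² dμ ≥ μ(𝒟), then every Γ-invariant C² solution u of the Gauss equation Δu + 1 − e^{2u} − t²y⁴|φ(z)|²e^{−2u} = 0 satisfies ∫_𝒟 (e^{2u} − t²y⁴|φ|²e^{−2u}) dμ < 0; in particular, taking the constant test function ξ ≡ 1, the stability quadratic form ∫_𝒟 y²|∇ξ|² dμ + 2∫_𝒟 (e^{2u} − t²y⁴|φ|²e^{−2u})ξ² dμ is negative, so the first eigenvalue of the linearized operator L = −Δ + 2(e^{2u} − t²y⁴|φ|²e^{−2u}) is negative at any solution. -/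

import Mathlib

open Complex MeasureTheory Real Filter

noncomputable section

/-- The upper half-plane, viewed as a subset of `ℂ`. -/
def UH : Set ℂ := {z : ℂ | 0 < z.im}

/-- The Möbius action of `SL(2, ℝ)` on the upper half-plane (as a map on `ℂ`). -/
def moebius (γ : Matrix.SpecialLinearGroup (Fin 2) ℝ) (z : ℂ) : ℂ :=
  (((γ 0 0 : ℝ) : ℂ) * z + ((γ 0 1 : ℝ) : ℂ)) / (((γ 1 0 : ℝ) : ℂ) * z + ((γ 1 1 : ℝ) : ℂ))

/-- The hyperbolic Laplacian `Δu = y² (∂²u/∂x² + ∂²u/∂y²)`. -/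
def hypLap (u : ℂ → ℝ) (z : ℂ) : ℝ :=
  z.im ^ 2 * (iteratedFDeriv ℝ 2 u z ![1, 1] + iteratedFDeriv ℝ 2 u z ![Complex.I, Complex.I])

/-- The squared Euclidean gradient `|∇u|² = (∂u/∂x)² + (∂u/∂y)²`. -/
def gradSq (u : ℂ → ℝ) (z : ℂ) : ℝ :=
  (fderiv ℝ u z 1) ^ 2 + (fderiv ℝ u z Complex.I) ^ 2

/-- `u` is invariant under the Möbius action of the subgroup `Γ` on the upper half-plane. -/
def GammaInv (Γ : Subgroup (Matrix.SpecialLinearGroup (Fin 2) ℝ)) (u : ℂ → ℝ) : Prop :=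
  ∀ γ ∈ Γ, ∀ z ∈ UH, u (moebius γ z) = u z

/-- The Gauss equation `Δu + 1 - e^{2u} - t² y⁴ |φ(z)|² e^{-2u} = 0` on the upper half-plane. -/
def GaussEq (φ : ℂ → ℂ) (t : ℝ) (u : ℂ → ℝ) : Prop :=
  ∀ z ∈ UH, hypLap u z + 1 - Real.exp (2 * u z)
    - t ^ 2 * z.im ^ 4 * ‖φ z‖ ^ 2 * Real.exp (-2 * u z) = 0

/-- Integral over a fundamental domain `D` with respect to the hyperbolic
area measure `dμ = y⁻² dx dy`. -/
def hInt (D : Set ℂ) (f : ℂ → ℝ) : ℝ := ∫ z in D, f z * (z.im ^ 2)⁻¹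

/-! The Gauss equation forces `u ≤ 0`: being Γ-invariant and continuous, `u` attains its
maximum on `ℍ` (cocompactness), and there `Δu ≤ 0` gives `e^{2u} ≤ 1 - t²y⁴|φ|²e^{-2u} ≤ 1`.
Hence `e^{2u} ≤ 1 ≤ e^{-2u}`, and integrating over `𝒟` gives
`∫ (e^{2u} - t²y⁴|φ|²e^{-2u}) dμ ≤ μ(𝒟) - t² ∫ y⁴|φ|² dμ ≤ 0`. The inequality is strict: if
`u ≡ 0`, the Gauss equation forces `tφ ≡ 0` and the hypothesis would give `μ(𝒟) ≤ 0`; otherwise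
`{u < 0}` is a nonempty open Γ-invariant set, which meets `𝒟` in positive measure because Γ is
countable and Möbius maps preserve null sets. -/

open scoped MatrixGroups UpperHalfPlane Topology

lemma isOpen_UH : IsOpen UH := isOpen_lt continuous_const continuous_im

lemma I_mem_UH : I ∈ UH := by simp [UH]

lemma moebius_coe (γ : SL(2, ℝ)) (z : ℍ) : moebius γ z = ↑(γ • z) := by
  simp [UpperHalfPlane.coe_specialLinearGroup_apply, moebius]

lemma moebius_mem_UH (γ : SL(2, ℝ)) {z : ℂ} (hz : z ∈ UH) : moebius γ z ∈ UH := by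
  show 0 < (moebius γ z).im
  rw [moebius_coe γ ⟨z, hz⟩]
  exact UpperHalfPlane.im_pos _

lemma moebius_inv_moebius (γ : SL(2, ℝ)) {z : ℂ} (hz : z ∈ UH) :
    moebius γ⁻¹ (moebius γ z) = z := by
  rw [moebius_coe γ ⟨z, hz⟩, moebius_coe γ⁻¹, inv_smul_smul]

lemma differentiableOn_moebius (γ : SL(2, ℝ)) : DifferentiableOn ℂ (moebius γ) UH := by
  unfold moebius
  refine DifferentiableOn.div (by fun_prop) (by fun_prop) fun z hz => ?_
  simpa [UpperHalfPlane.denom] using UpperHalfPlane.denom_ne_zero γ ⟨z, hz⟩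

lemma IsLocalMax.iteratedDeriv_two_nonpos {f : ℝ → ℝ} {a : ℝ} (h : IsLocalMax f a)
    (hc : ContinuousAt f a) : iteratedDeriv 2 f a ≤ 0 := by
  rw [iteratedDeriv_succ, iteratedDeriv_one]
  -- if `f'' a > 0`, the second derivative test makes `a` a local minimum too
  by_contra! hpos
  have hmin := isLocalMin_of_deriv_deriv_pos hpos h.deriv_eq_zero hc
  have hconst : f =ᶠ[𝓝 a] fun _ => f a := by
    filter_upwards [h, hmin] with x hx hx' using le_antisymm hx hx'
  simp [hconst.deriv.deriv_eq] at hpos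

lemma IsLocalMax.iteratedFDeriv_two_nonpos {E : Type*} [NormedAddCommGroup E] [NormedSpace ℝ E]
    {u : E → ℝ} {a : E} (h : IsLocalMax u a) (hu : ContDiffAt ℝ 2 u a) (v : E) :
    iteratedFDeriv ℝ 2 u a (fun _ => v) ≤ 0 := by
  set line : ℝ → E := fun s => a + s • v
  have hline : line 0 = a := by simp [line]
  have hderiv : deriv line = fun _ => v :=
    funext fun s => (((hasDerivAt_id s).smul_const v).const_add a).deriv.trans (one_smul ℝ v)
  have hcomp := iteratedDeriv_vcomp_two (x := 0) (hline ▸ hu) (f := line) (by fun_prop)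
  have hline2 : iteratedDeriv 2 line 0 = 0 := by
    rw [iteratedDeriv_succ, iteratedDeriv_one, hderiv, deriv_const]
  rw [hline, hderiv, hline2, map_zero, add_zero] at hcomp
  rw [← hcomp]
  exact ((hline ▸ h).comp_continuous (by fun_prop)).iteratedDeriv_two_nonpos
    ((hline ▸ hu.continuousAt).comp (by fun_prop))

lemma hypLap_nonpos_of_isLocalMax {u : ℂ → ℝ} {z : ℂ} (h : IsLocalMax u z)
    (hu : ContDiffAt ℝ 2 u z) : hypLap u z ≤ 0 := by
  have hdiag (v : ℂ) : (![v, v] : Fin 2 → ℂ) = fun _ => v :=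
    funext (Fin.forall_fin_two.2 ⟨rfl, rfl⟩)
  have h1 := h.iteratedFDeriv_two_nonpos hu 1
  have hI := h.iteratedFDeriv_two_nonpos hu I
  rw [hypLap, hdiag, hdiag]
  exact mul_nonpos_of_nonneg_of_nonpos (sq_nonneg _) (by linarith)

lemma hypLap_eq_zero_of_eventuallyEq_zero {u : ℂ → ℝ} {z : ℂ} (h : u =ᶠ[𝓝 z] 0) :
    hypLap u z = 0 := by
  simp [hypLap, (h.iteratedFDeriv ℝ 2).eq_of_nhds]

namespace GaussEq

variable {φ : ℂ → ℂ} {t : ℝ} {u : ℂ → ℝ}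

lemma nonpos_of_isCompact_image (hg : GaussEq φ t u) (hu : ContDiffOn ℝ 2 u UH)
    (himage : IsCompact (u '' UH)) {z : ℂ} (hz : z ∈ UH) : u z ≤ 0 := by
  obtain ⟨_, ⟨z₀, hz₀, rfl⟩, hmax⟩ := himage.exists_isGreatest ⟨_, I, I_mem_UH, rfl⟩
  have hnhds := isOpen_UH.mem_nhds hz₀
  have hL := hypLap_nonpos_of_isLocalMax
    (IsMaxOn.isLocalMax (fun z hz => hmax ⟨z, hz, rfl⟩) hnhds) (hu.contDiffAt hnhds)
  have hq : 0 ≤ t ^ 2 * z₀.im ^ 4 * ‖φ z₀‖ ^ 2 * Real.exp (-2 * u z₀) := by positivity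
  have hexp : Real.exp (2 * u z₀) ≤ 1 := by linarith [hg z₀ hz₀]
  linarith [hmax ⟨z, hz, rfl⟩, exp_le_one_iff.1 hexp]

lemma data_eq_zero_of_eqOn_zero (hg : GaussEq φ t u) (h0 : ∀ z ∈ UH, u z = 0) {z : ℂ}
    (hz : z ∈ UH) : t ^ 2 * z.im ^ 4 * ‖φ z‖ ^ 2 = 0 := by
  have hev : u =ᶠ[𝓝 z] 0 := Filter.eventually_of_mem (isOpen_UH.mem_nhds hz) h0
  simpa [hypLap_eq_zero_of_eventuallyEq_zero hev, h0 z hz] using hg z hz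

end GaussEq

lemma countable_of_properlyDiscontinuous {Γ : Subgroup SL(2, ℝ)}
    (hdisc : ∀ K : Set ℂ, K ⊆ UH → IsCompact K →
      {γ : SL(2, ℝ) | γ ∈ Γ ∧ ((moebius γ '' K) ∩ K).Nonempty}.Finite) :
    (Γ : Set SL(2, ℝ)).Countable := by
  let K := CompactExhaustion.choice ℍ
  have hK (n : ℕ) : UpperHalfPlane.coe '' K n ⊆ UH := by
    rintro _ ⟨z, -, rfl⟩; exact z.im_pos
  refine (Set.countable_iUnion fun n => (hdisc _ (hK n)
    ((K.isCompact n).image UpperHalfPlane.continuous_coe)).countable).mono fun γ hγ => ?_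
  -- `γ` moves `I` inside one compact piece of an exhaustion of `ℍ`
  let i := UpperHalfPlane.I
  obtain ⟨n, hn⟩ := K.exists_superset_of_isCompact ({i, γ • i} : Set ℍ).toFinite.isCompact
  exact Set.mem_iUnion.2 ⟨n, hγ, moebius γ i, ⟨i, ⟨i, hn (by simp), rfl⟩, rfl⟩,
    ⟨γ • i, hn (by simp), (moebius_coe γ i).symm⟩⟩

section FundamentalDomain

variable {Γ : Subgroup SL(2, ℝ)} {D : Set ℂ}

lemma volume_eq_zero_of_volume_inter_eq_zero (hΓ : (Γ : Set SL(2, ℝ)).Countable)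
    (hDfund : ∀ z ∈ UH, ∃ γ ∈ Γ, moebius γ z ∈ D) {S : Set ℂ} (hS : S ⊆ UH)
    (hSinv : ∀ γ ∈ Γ, ∀ z ∈ S, moebius γ z ∈ S) (h0 : volume (S ∩ D) = 0) : volume S = 0 := by
  have hcover : S ⊆ ⋃ γ ∈ (Γ : Set SL(2, ℝ)), moebius γ⁻¹ '' (S ∩ D) := by
    intro z hz
    obtain ⟨γ, hγ, hγz⟩ := hDfund z (hS hz)
    exact Set.mem_biUnion hγ ⟨_, ⟨hSinv γ hγ z hz, hγz⟩, moebius_inv_moebius γ (hS hz)⟩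
  refine measure_mono_null hcover ((measure_biUnion_null_iff hΓ).2 fun γ _ => ?_)
  exact addHaar_image_eq_zero_of_differentiableOn_of_addHaar_eq_zero volume
    (((differentiableOn_moebius γ⁻¹).restrictScalars ℝ).mono
      (Set.inter_subset_left.trans hS)) h0

lemma volume_inter_pos (hΓ : (Γ : Set SL(2, ℝ)).Countable)
    (hDfund : ∀ z ∈ UH, ∃ γ ∈ Γ, moebius γ z ∈ D) {S : Set ℂ} (hSo : IsOpen S)
    (hSne : S.Nonempty) (hS : S ⊆ UH) (hSinv : ∀ γ ∈ Γ, ∀ z ∈ S, moebius γ z ∈ S) :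
    0 < volume (S ∩ D) :=
  pos_iff_ne_zero.2 fun h0 => (hSo.measure_pos volume hSne).ne'
    (volume_eq_zero_of_volume_inter_eq_zero hΓ hDfund hS hSinv h0)

end FundamentalDomain

lemma GammaInv.isCompact_image {Γ : Subgroup SL(2, ℝ)} {u : ℂ → ℝ} (hu : GammaInv Γ u)
    (hc : ContinuousOn u UH)
    (hcocompact : ∃ K : Set ℂ, K ⊆ UH ∧ IsCompact K ∧ ∀ z ∈ UH, ∃ γ ∈ Γ, moebius γ z ∈ K) :
    IsCompact (u '' UH) := by
  obtain ⟨K, hKsub, hK, hcover⟩ := hcocompact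
  have himage : u '' UH = u '' K := by
    refine (Set.image_mono hKsub).antisymm' ?_
    rintro _ ⟨z, hz, rfl⟩
    obtain ⟨γ, hγ, hγz⟩ := hcover z hz
    exact ⟨_, hγz, hu γ hγ z hz⟩
  exact himage ▸ hK.image_of_continuousOn (hc.mono hKsub)

lemma setIntegral_pos_of_pos_on {α : Type*} [MeasurableSpace α] {μ : Measure α} {f : α → ℝ}
    {s t : Set α} (hs : MeasurableSet s) (hf : IntegrableOn f s μ) (hnn : ∀ x ∈ s, 0 ≤ f x)
    (hpos : ∀ x ∈ t ∩ s, 0 < f x) (ht : 0 < μ (t ∩ s)) : 0 < ∫ x in s, f x ∂μ := by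
  rw [setIntegral_pos_iff_support_of_nonneg_ae (ae_restrict_of_forall_mem hs hnn) hf]
  exact ht.trans_le (measure_mono fun x hx => ⟨(hpos x hx).ne', hx.2⟩)

section HyperbolicIntegral

lemma continuousOn_inv_im_sq : ContinuousOn (fun z : ℂ => (z.im ^ 2)⁻¹) UH :=
  (by fun_prop : ContinuousOn (fun z : ℂ => z.im ^ 2) UH).inv₀ fun z hz => (pow_pos hz 2).ne'

variable {D : Set ℂ} {f g : ℂ → ℝ}

lemma hInt_sub (hf : IntegrableOn (fun z => f z * (z.im ^ 2)⁻¹) D)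
    (hg : IntegrableOn (fun z => g z * (z.im ^ 2)⁻¹) D) :
    hInt D (fun z => f z - g z) = hInt D f - hInt D g := by
  simp only [hInt, sub_mul]
  exact integral_sub hf hg

lemma hInt_one_pos (hDmeas : MeasurableSet D) (hDsub : D ⊆ UH)
    (hDfin : IntegrableOn (fun z => (z.im ^ 2)⁻¹) D) {s : Set ℂ} (hs : 0 < volume (s ∩ D)) :
    0 < hInt D fun _ => 1 := by
  simpa [hInt] using setIntegral_pos_of_pos_on hDmeas hDfin (fun z _ => by positivity)
    (fun z hz => inv_pos.2 (pow_pos (hDsub hz.2) 2)) hs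

lemma integrableOn_exp_two_mul (hDmeas : MeasurableSet D) (hDsub : D ⊆ UH)
    (hDfin : IntegrableOn (fun z => (z.im ^ 2)⁻¹) D) {u : ℂ → ℝ} (hu : ContinuousOn u D)
    (hu0 : ∀ z ∈ D, u z ≤ 0) :
    IntegrableOn (fun z => Real.exp (2 * u z) * (z.im ^ 2)⁻¹) D := by
  have hw := continuousOn_inv_im_sq.mono hDsub
  refine hDfin.mono' ((by fun_prop : ContinuousOn _ D).aestronglyMeasurable hDmeas) ?_
  filter_upwards [ae_restrict_mem hDmeas] with z hz
  rw [norm_of_nonneg (by positivity)]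
  exact mul_le_of_le_one_left (by positivity) (exp_le_one_iff.2 (by linarith [hu0 z hz]))

lemma integrableOn_mul_exp_neg_two_mul (hDmeas : MeasurableSet D) (hDsub : D ⊆ UH)
    {u q : ℂ → ℝ} (hu : ContinuousOn u D) (hq : ContinuousOn q D) (hq0 : ∀ z ∈ D, 0 ≤ q z)
    {m : ℝ} (hm : ∀ z ∈ D, m ≤ u z)
    (hQ : IntegrableOn (fun z => q z * (z.im ^ 2)⁻¹) D) :
    IntegrableOn (fun z => q z * Real.exp (-2 * u z) * (z.im ^ 2)⁻¹) D := by
  have hw := continuousOn_inv_im_sq.mono hDsub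
  refine (hQ.const_mul (Real.exp (-2 * m))).mono'
    ((by fun_prop : ContinuousOn _ D).aestronglyMeasurable hDmeas) ?_
  filter_upwards [ae_restrict_mem hDmeas] with z hz
  have hqw : 0 ≤ q z * (z.im ^ 2)⁻¹ := mul_nonneg (hq0 z hz) (by positivity)
  rw [norm_of_nonneg (by have := hq0 z hz; positivity)]
  calc q z * Real.exp (-2 * u z) * (z.im ^ 2)⁻¹
      = Real.exp (-2 * u z) * (q z * (z.im ^ 2)⁻¹) := by ring
    _ ≤ Real.exp (-2 * m) * (q z * (z.im ^ 2)⁻¹) :=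
      mul_le_mul_of_nonneg_right (exp_le_exp.2 (by linarith [hm z hz])) hqw

lemma hInt_exp_sub_mul_exp_neg_lt_zero (hDmeas : MeasurableSet D) (hDsub : D ⊆ UH)
    (hDfin : IntegrableOn (fun z => (z.im ^ 2)⁻¹) D) {u q : ℂ → ℝ} (hu : ContinuousOn u D)
    (hq : ContinuousOn q D) (hq0 : ∀ z ∈ D, 0 ≤ q z) (hu0 : ∀ z ∈ D, u z ≤ 0) {m : ℝ}
    (hm : ∀ z ∈ D, m ≤ u z) {s : Set ℂ} (hus : ∀ z ∈ s ∩ D, u z < 0)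
    (hs : 0 < volume (s ∩ D)) (hlarge : hInt D (fun _ => 1) ≤ hInt D q) :
    hInt D (fun z => Real.exp (2 * u z) - q z * Real.exp (-2 * u z)) < 0 := by
  have hw (z : ℂ) (hz : z ∈ D) : 0 < (z.im ^ 2)⁻¹ := inv_pos.2 (pow_pos (hDsub hz) 2)
  have h1 : IntegrableOn (fun z => 1 * (z.im ^ 2)⁻¹) D := by simpa using hDfin
  have hE := integrableOn_exp_two_mul hDmeas hDsub hDfin hu hu0
  have hQ : IntegrableOn (fun z => q z * (z.im ^ 2)⁻¹) D := by
    -- otherwise `hInt D q` is the junk value `0`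
    by_contra hQ
    have : hInt D q = 0 := integral_undef hQ
    linarith [hInt_one_pos hDmeas hDsub hDfin hs]
  have hR := integrableOn_mul_exp_neg_two_mul hDmeas hDsub hu hq hq0 hm hQ
  have hE_lt : hInt D (fun z => Real.exp (2 * u z)) < hInt D fun _ => 1 := by
    have hpos : 0 < ∫ z in D, (1 - Real.exp (2 * u z)) * (z.im ^ 2)⁻¹ := by
      refine setIntegral_pos_of_pos_on hDmeas
        (by simpa only [sub_mul, Pi.sub_def] using h1.sub hE) (fun z hz => ?_) (fun z hz => ?_) hs
      · exact mul_nonneg (sub_nonneg.2 (exp_le_one_iff.2 (by linarith [hu0 z hz])))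
          (hw z hz).le
      · exact mul_pos (sub_pos.2 (exp_lt_one_iff.2 (by linarith [hus z hz]))) (hw z hz.2)
    rw [← hInt, hInt_sub h1 hE] at hpos
    linarith
  have hR_ge : hInt D q ≤ hInt D fun z => q z * Real.exp (-2 * u z) := by
    refine setIntegral_mono_on hQ hR hDmeas fun z hz => ?_
    have hqw : 0 ≤ q z * (z.im ^ 2)⁻¹ := mul_nonneg (hq0 z hz) (hw z hz).le
    calc q z * (z.im ^ 2)⁻¹ = q z * (z.im ^ 2)⁻¹ * 1 := (mul_one _).symm
      _ ≤ q z * (z.im ^ 2)⁻¹ * Real.exp (-2 * u z) :=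
        mul_le_mul_of_nonneg_left (one_le_exp (by linarith [hu0 z hz])) hqw
      _ = q z * Real.exp (-2 * u z) * (z.im ^ 2)⁻¹ := by ring
  rw [hInt_sub hE hR]
  linarith

end HyperbolicIntegral

theorem instability_for_large_t_general
    (Γ : Subgroup (Matrix.SpecialLinearGroup (Fin 2) ℝ))
    (hdisc : ∀ K : Set ℂ, K ⊆ UH → IsCompact K →
      {γ : Matrix.SpecialLinearGroup (Fin 2) ℝ | γ ∈ Γ ∧ ((moebius γ '' K) ∩ K).Nonempty}.Finite)
    (hcocompact : ∃ K : Set ℂ, K ⊆ UH ∧ IsCompact K ∧ ∀ z ∈ UH, ∃ γ ∈ Γ, moebius γ z ∈ K)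
    (φ : ℂ → ℂ) (hφ : DifferentiableOn ℂ φ UH)
    (D : Set ℂ) (hDmeas : MeasurableSet D) (hDsub : D ⊆ UH)
    (hDfund : ∀ z ∈ UH, ∃ γ ∈ Γ, moebius γ z ∈ D)
    (hDfin : IntegrableOn (fun z => (z.im ^ 2)⁻¹) D volume)
    (t : ℝ)
    (hlarge : hInt D (fun _ => 1)
      ≤ t ^ 2 * hInt D (fun z => z.im ^ 4 * ‖φ z‖ ^ 2))
    (u : ℂ → ℝ) (hu : ContDiffOn ℝ 2 u UH) (huinv : GammaInv Γ u)
    (hgauss : GaussEq φ t u) :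
    hInt D (fun z => Real.exp (2 * u z) - t ^ 2 * z.im ^ 4 * ‖φ z‖ ^ 2 * Real.exp (-2 * u z)) < 0
    ∧ hInt D (fun z => z.im ^ 2 * gradSq (fun _ => (1 : ℝ)) z)
        + 2 * hInt D (fun z =>
            (Real.exp (2 * u z) - t ^ 2 * z.im ^ 4 * ‖φ z‖ ^ 2 * Real.exp (-2 * u z)) * (1 : ℝ) ^ 2) < 0 := by
  set q : ℂ → ℝ := fun z => t ^ 2 * z.im ^ 4 * ‖φ z‖ ^ 2
  have hΓ := countable_of_properlyDiscontinuous hdisc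
  have hP : 0 < hInt D fun _ => 1 := hInt_one_pos hDmeas hDsub hDfin <| volume_inter_pos hΓ hDfund
    isOpen_UH ⟨I, I_mem_UH⟩ subset_rfl fun γ _ _ => moebius_mem_UH γ
  have hlarge' : hInt D (fun _ => 1) ≤ hInt D q := by
    convert hlarge using 1
    simp only [hInt, q, ← integral_const_mul, mul_assoc]
  have himage := huinv.isCompact_image hu.continuousOn hcocompact
  have hu0 (z : ℂ) (hz : z ∈ UH) : u z ≤ 0 := hgauss.nonpos_of_isCompact_image hu himage hz
  obtain ⟨m, hm⟩ := himage.bddBelow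
  set S := UH ∩ u ⁻¹' Set.Iio 0
  have hSne : S.Nonempty := by
    by_contra hS
    have h0 (z : ℂ) (hz : z ∈ UH) : u z = 0 :=
      le_antisymm (hu0 z hz) (not_lt.1 fun h => hS ⟨z, hz, h⟩)
    have : hInt D q = 0 := setIntegral_eq_zero_of_forall_eq_zero fun z hz => by
      simp [q, hgauss.data_eq_zero_of_eqOn_zero h0 (hDsub hz)]
    linarith
  have hS : 0 < volume (S ∩ D) := volume_inter_pos hΓ hDfund
    (hu.continuousOn.isOpen_inter_preimage isOpen_UH isOpen_Iio) hSne Set.inter_subset_left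
    fun γ hγ z hz => ⟨moebius_mem_UH γ hz.1, by simpa [huinv γ hγ z hz.1] using hz.2⟩
  have hneg := hInt_exp_sub_mul_exp_neg_lt_zero hDmeas hDsub hDfin
    (hu.continuousOn.mono hDsub)
    (by have := hφ.continuousOn.mono hDsub; fun_prop) (fun z _ => by positivity)
    (fun z hz => hu0 z (hDsub hz)) (fun z hz => hm ⟨z, hDsub hz, rfl⟩) (fun z hz => hz.1.2) hS
    hlarge'
  refine ⟨hneg, ?_⟩
  simpa [hInt, gradSq, q] using mul_neg_of_pos_of_neg two_pos hneg

theorem instability_for_large_t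
    (Γ : Subgroup (Matrix.SpecialLinearGroup (Fin 2) ℝ))
    (hfree : ∀ γ ∈ Γ, γ ≠ 1 → ∀ z ∈ UH, moebius γ z ≠ z)
    (hdisc : ∀ K : Set ℂ, K ⊆ UH → IsCompact K →
      {γ : Matrix.SpecialLinearGroup (Fin 2) ℝ | γ ∈ Γ ∧ ((moebius γ '' K) ∩ K).Nonempty}.Finite)
    (hcocompact : ∃ K : Set ℂ, K ⊆ UH ∧ IsCompact K ∧ ∀ z ∈ UH, ∃ γ ∈ Γ, moebius γ z ∈ K)
    (φ : ℂ → ℂ) (hφ : DifferentiableOn ℂ φ UH)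
    (hφeq : ∀ γ ∈ Γ, ∀ z ∈ UH,
      φ (moebius γ z) = (((γ 1 0 : ℝ) : ℂ) * z + ((γ 1 1 : ℝ) : ℂ)) ^ 4 * φ z)
    (D : Set ℂ) (hDmeas : MeasurableSet D) (hDsub : D ⊆ UH)
    (hDfund : ∀ z ∈ UH, ∃ γ ∈ Γ, moebius γ z ∈ D)
    (hDfin : IntegrableOn (fun z => (z.im ^ 2)⁻¹) D volume)
    (t : ℝ) (ht : 0 < t)
    (hlarge : hInt D (fun _ => 1)
      ≤ t ^ 2 * hInt D (fun z => z.im ^ 4 * ‖φ z‖ ^ 2))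
    (u : ℂ → ℝ) (hu : ContDiffOn ℝ 2 u UH) (huinv : GammaInv Γ u)
    (hgauss : GaussEq φ t u) :
    hInt D (fun z => Real.exp (2 * u z) - t ^ 2 * z.im ^ 4 * ‖φ z‖ ^ 2 * Real.exp (-2 * u z)) < 0
    ∧ hInt D (fun z => z.im ^ 2 * gradSq (fun _ => (1 : ℝ)) z)
        + 2 * hInt D (fun z =>
            (Real.exp (2 * u z) - t ^ 2 * z.im ^ 4 * ‖φ z‖ ^ 2 * Real.exp (-2 * u z)) * (1 : ℝ) ^ 2) < 0 :=
  instability_for_large_t_general Γ hdisc hcocompact φ hφ D hDmeas hDsub hDfund hDfin t hlarge u hu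
    huinv hgauss

end
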